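/- A De Morgan clone C with DMA ⊆ C contains a unary non-persistent function if and only if C contains one of the unary functions □, id_{n↦t}, id_{b↦t}. Moreover, C contains a unary function which is harmonious and non-persistent if and only if C contains □. -/

import Mathlib

set_option autoImplicit false

/-- The four truth values of the Belnap–Dunn logic. -/
inductive DM4 : Type
  | t
  | f
  | n
  | b
deriving DecidableEq

namespace DM4

/-- De Morgan negation. -/
def neg : DM4 → DM4
  | t => f
  | f => t
  | n => n
  | b => b

/-- Conflation. -/
def conf : DM4 → DM4
  | t => t
  | f => f
  | n => b
  | b => n

/-- Meet in the truth order. -/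
def meet : DM4 → DM4 → DM4
  | f, _ => f
  | _, f => f
  | t, y => y
  | x, t => x
  | n, n => n
  | b, b => b
  | n, b => f
  | b, n => f

/-- Join in the truth order. -/
def join : DM4 → DM4 → DM4
  | t, _ => t
  | _, t => t
  | f, y => y
  | x, f => x
  | n, n => n
  | b, b => b
  | n, b => t
  | b, n => t

/-- Meet in the information order (⊗). -/
def imeet : DM4 → DM4 → DM4
  | n, _ => n
  | _, n => n
  | b, y => y
  | x, b => x
  | t, t => t
  | f, f => f
  | t, f => n
  | f, t => n

/-- Join in the information order (⊕). -/
def ijoin : DM4 → DM4 → DM4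
  | b, _ => b
  | _, b => b
  | n, y => y
  | x, n => x
  | t, t => t
  | f, f => f
  | t, f => b
  | f, t => b

/-- The truth order: least element `f`, greatest element `t`, with `n`, `b` incomparable. -/
def tle (x y : DM4) : Prop := x = y ∨ x = f ∨ y = t

/-- The information order: least element `n`, greatest element `b`, with `t`, `f` incomparable. -/
def ile (x y : DM4) : Prop := x = y ∨ x = n ∨ y = b

/-- □: maps t to t and everything else to f. -/
def box : DM4 → DM4
  | t => t
  | _ => f

/-- ◇: maps f to f and everything else to t. -/
def diamond : DM4 → DM4
  | f => f
  | _ => t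

/-- Δ: maps t, b to t and n, f to f. -/
def delta : DM4 → DM4
  | t => t
  | b => t
  | _ => f

/-- ∇: maps t, n to t and b, f to f. -/
def nabla : DM4 → DM4
  | t => t
  | n => t
  | _ => f

/-- id_{b↦n}: maps b to n and fixes t, f, n. -/
def idbn : DM4 → DM4
  | b => n
  | x => x

/-- id_{n↦b}: maps n to b and fixes t, f, b. -/
def idnb : DM4 → DM4
  | n => b
  | x => x

/-- id_{n↦t}: maps n to t and fixes t, f, b. -/
def idnt : DM4 → DM4
  | n => t
  | x => x

/-- id_{b↦t}: maps b to t and fixes t, f, n. -/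
def idbt : DM4 → DM4
  | b => t
  | x => x

/-- t_{n↦n}: maps n to n and everything else to t. -/
def tnn : DM4 → DM4
  | n => n
  | _ => t

/-- t_{b↦b}: maps b to b and everything else to t. -/
def tbb : DM4 → DM4
  | b => b
  | _ => t

/-- The binary function pbp²₁. -/
def pbp1 : DM4 → DM4 → DM4
  | t, t => t | t, f => f | t, n => f | t, b => b
  | f, t => t | f, f => f | f, n => f | f, b => b
  | n, t => t | n, f => f | n, n => n | n, b => b
  | b, t => b | b, f => f | b, n => f | b, b => b

/-- The binary function pbp²₂. -/
def pbp2 : DM4 → DM4 → DM4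
  | t, t => t | t, f => f | t, n => n | t, b => f
  | f, t => t | f, f => f | f, n => n | f, b => f
  | n, t => n | n, f => f | n, n => n | n, b => f
  | b, t => t | b, f => f | b, n => n | b, b => b

/-- The binary function mnh²₁. -/
def mnh1 : DM4 → DM4 → DM4
  | t, t => f | t, f => f | t, n => n | t, b => b
  | f, t => f | f, f => f | f, n => n | f, b => b
  | n, t => f | n, f => f | n, n => n | n, b => f
  | b, t => f | b, f => f | b, n => n | b, b => b

/-- The binary function mnh²₂. -/
def mnh2 : DM4 → DM4 → DM4
  | t, t => f | t, f => f | t, n => n | t, b => b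
  | f, t => f | f, f => f | f, n => n | f, b => b
  | n, t => f | n, f => f | n, n => n | n, b => b
  | b, t => f | b, f => f | b, n => f | b, b => b

/-- The binary function mhnp². -/
def mhnp2 : DM4 → DM4 → DM4
  | t, _ => t
  | f, _ => t
  | n, b => f
  | n, _ => n
  | b, n => f
  | b, _ => b

/-- The binary function mnp²₁. -/
def mnp1 : DM4 → DM4 → DM4
  | t, b => b
  | t, _ => t
  | f, b => b
  | f, _ => t
  | n, b => f
  | n, _ => n
  | b, n => f
  | b, _ => b

/-- The binary function mnp²₂. -/
def mnp2 : DM4 → DM4 → DM4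
  | t, _ => t
  | f, _ => t
  | n, _ => n
  | b, n => f
  | b, _ => b

/-- The binary function mnp²₃. -/
def mnp3 : DM4 → DM4 → DM4
  | t, n => n
  | t, _ => t
  | f, n => n
  | f, _ => t
  | n, b => f
  | n, _ => n
  | b, n => f
  | b, _ => b

/-- The binary function mnp²₄. -/
def mnp4 : DM4 → DM4 → DM4
  | t, _ => t
  | f, _ => t
  | n, b => f
  | n, _ => n
  | b, _ => b

/-- The ternary function mhnp³. -/
def mhnp3 : DM4 → DM4 → DM4 → DM4
  | _, t, _ => f
  | _, f, _ => f
  | t, n, _ => n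
  | f, n, _ => f
  | b, n, _ => f
  | n, n, b => f
  | n, n, _ => n
  | t, b, _ => b
  | f, b, _ => f
  | n, b, _ => f
  | b, b, n => f
  | b, b, _ => b

/-- The set of designated values. -/
def Des : Set DM4 := {t, b}

/-- Designatedness as a Boolean predicate. -/
def des : DM4 → Bool
  | t => true
  | b => true
  | _ => false

/-- The protoimplication →_{t-max}. -/
def tmax (x y : DM4) : DM4 :=
  match des x, des y with
  | true, false => n
  | _, _ => t

/-- The protoimplication →_{i-max}. -/
def imax (x y : DM4) : DM4 :=
  match des x, des y with
  | true, false => f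
  | _, _ => b

/-- The protoimplication ↔_{t-min}. -/
def tmin (x y : DM4) : DM4 := if x = y then b else f

/-- The protoimplication ↔_{i-min}. -/
def imin (x y : DM4) : DM4 := if x = y then t else n

/-- A binary operation is a protoimplication if it satisfies Reflexivity and Modus Ponens
with respect to the designated set {t, b}. -/
def IsProtoimplication (r : DM4 → DM4 → DM4) : Prop :=
  (∀ a : DM4, r a a ∈ Des) ∧ ∀ a c : DM4, a ∈ Des → r a c ∈ Des → c ∈ Des

/-- `DMFun k` is the type of De Morgan functions of arity `k + 1` (arities are positive). -/
abbrev DMFun (k : ℕ) : Type := (Fin (k + 1) → DM4) → DM4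

/-- Membership in the clone generated by the family of operations `S`
(`S k` is the set of generators of arity `k + 1`). -/
inductive InClone (S : ∀ k : ℕ, Set (DMFun k)) : ∀ k : ℕ, DMFun k → Prop
  | base {k : ℕ} {g : DMFun k} : g ∈ S k → InClone S k g
  | proj {k : ℕ} (i : Fin (k + 1)) : InClone S k (fun x => x i)
  | comp {k m : ℕ} {g : DMFun m} {h : Fin (m + 1) → DMFun k} :
      InClone S m g → (∀ i, InClone S k (h i)) →
      InClone S k (fun x => g (fun i => h i x))

/-- A family of sets of De Morgan functions is a clone if it contains all projections
and is closed under composition. -/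
structure IsClone (C : ∀ k : ℕ, Set (DMFun k)) : Prop where
  proj : ∀ (k : ℕ) (i : Fin (k + 1)), (fun x => x i) ∈ C k
  comp : ∀ (k m : ℕ) (g : DMFun m) (h : Fin (m + 1) → DMFun k),
      g ∈ C m → (∀ i, h i ∈ C k) → (fun x => g (fun i => h i x)) ∈ C k

/-- The generating family consisting of a single unary operation. -/
def op1 (g : DM4 → DM4) : ∀ k : ℕ, Set (DMFun k)
  | 0 => {fun x => g (x 0)}
  | _ + 1 => ∅

/-- The generating family consisting of a single binary operation. -/
def op2 (g : DM4 → DM4 → DM4) : ∀ k : ℕ, Set (DMFun k)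
  | 1 => {fun x => g (x 0) (x 1)}
  | _ => ∅

/-- The generating family consisting of a single ternary operation. -/
def op3 (g : DM4 → DM4 → DM4 → DM4) : ∀ k : ℕ, Set (DMFun k)
  | 2 => {fun x => g (x 0) (x 1) (x 2)}
  | _ => ∅

/-- Union of two families of operations. -/
def funion (S T : ∀ k : ℕ, Set (DMFun k)) : ∀ k : ℕ, Set (DMFun k) := fun k => S k ∪ T k

infixr:65 " ⊹ " => funion

/-- The generators of DLat: ∧, ∨, t, f (constants as unary constant functions). -/
def DLatGen : ∀ k : ℕ, Set (DMFun k) :=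
  op2 meet ⊹ op2 join ⊹ op1 (fun _ => t) ⊹ op1 (fun _ => f)

/-- The generators of DMA: ∧, ∨, t, f, −. -/
def DMAGen : ∀ k : ℕ, Set (DMFun k) := DLatGen ⊹ op1 neg

/-- The generators of BiLat: ∧, ∨, t, f, ⊗, ⊕, n, b. -/
def BiLatGen : ∀ k : ℕ, Set (DMFun k) :=
  DLatGen ⊹ op2 imeet ⊹ op2 ijoin ⊹ op1 (fun _ => n) ⊹ op1 (fun _ => b)

/-- A De Morgan function is harmonious if it commutes with conflation. -/
def Harmonious {k : ℕ} (g : DMFun k) : Prop :=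
  ∀ x : Fin (k + 1) → DM4, g (fun i => conf (x i)) = conf (g x)

/-- A De Morgan function is positive if it is monotone in the componentwise truth order. -/
def Positive {k : ℕ} (g : DMFun k) : Prop :=
  ∀ x y : Fin (k + 1) → DM4, (∀ i, tle (x i) (y i)) → tle (g x) (g y)

/-- A De Morgan function is persistent if it is monotone in the componentwise
information order. -/
def Persistent {k : ℕ} (g : DMFun k) : Prop :=
  ∀ x y : Fin (k + 1) → DM4, (∀ i, ile (x i) (y i)) → ile (g x) (g y)

/-- A De Morgan function preserves a subset X of DM4 if it maps tuples from X into X. -/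
def Preserves {k : ℕ} (g : DMFun k) (X : Set DM4) : Prop :=
  ∀ x : Fin (k + 1) → DM4, (∀ i, x i ∈ X) → g x ∈ X

def B2 : Set DM4 := {t, f}
def K3 : Set DM4 := {t, n, f}
def P3 : Set DM4 := {t, b, f}

/-- A unary operation as a De Morgan function. -/
def toF1 (g : DM4 → DM4) : DMFun 0 := fun x => g (x 0)

/-- A binary operation as a De Morgan function. -/
def toF2 (g : DM4 → DM4 → DM4) : DMFun 1 := fun x => g (x 0) (x 1)

/-- A ternary operation as a De Morgan function. -/
def toF3 (g : DM4 → DM4 → DM4 → DM4) : DMFun 2 := fun x => g (x 0) (x 1) (x 2)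

/-- The clone generated by a family of operations, as a family of sets. -/
def CloneOf (S : ∀ k : ℕ, Set (DMFun k)) : ∀ k : ℕ, Set (DMFun k) :=
  fun k => {g | InClone S k g}

/-- Inclusion of families of operations. -/
def CloneLE (C D : ∀ k : ℕ, Set (DMFun k)) : Prop := ∀ k : ℕ, C k ⊆ D k

/-!
A non-persistent unary function breaks the information order on one of the chains
`n ⊑ t ⊑ b`, `n ⊑ f ⊑ b`; precomposing with `−` we may take it to be the chain through `t`.
Postcomposing with `−`, or (when the value at `t` is `n` or `b`) combining the function with
the constants it produces from `t`, we obtain a function `s` of the clone with `s t = t`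
that still breaks this chain. Then `x ∧ s x` is `□`, `id_{n↦f}` or `id_{b↦f}`, and the last
two are conjugate under `−` to `id_{n↦t}` and `id_{b↦t}`. Harmonious functions form a
subclone above DMA, and `□` is the only harmonious one among the three.
-/

instance : Fintype DM4 :=
  ⟨⟨{t, f, n, b}, by decide⟩, fun x => by cases x <;> decide⟩

instance : DecidableRel ile := fun x y => inferInstanceAs (Decidable (x = y ∨ x = n ∨ y = b))

theorem ile_refl (a : DM4) : ile a a := Or.inl rfl

theorem n_ile (a : DM4) : ile n a := Or.inr (Or.inl rfl)

theorem ile_b (a : DM4) : ile a b := Or.inr (Or.inr rfl)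

theorem ile_trans {a c d : DM4} : ile a c → ile c d → ile a d := by
  revert a c d; decide

theorem ile_neg_neg_iff {a c : DM4} : ile (neg a) (neg c) ↔ ile a c := by
  revert a c; decide

theorem f_meet (a : DM4) : meet f a = f := by cases a <;> rfl

theorem conf_neg (a : DM4) : conf (neg a) = neg (conf a) := by cases a <;> rfl

theorem conf_meet (a c : DM4) : conf (meet a c) = meet (conf a) (conf c) := by
  revert a c; decide

theorem conf_join (a c : DM4) : conf (join a c) = join (conf a) (conf c) := by
  revert a c; decide

def idnf : DM4 → DM4
  | n => f
  | x => x

def idbf : DM4 → DM4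
  | b => f
  | x => x

theorem neg_idnf_neg : (fun x => neg (idnf (neg x))) = idnt := by
  funext x; cases x <;> rfl

theorem neg_idbf_neg : (fun x => neg (idbf (neg x))) = idbt := by
  funext x; cases x <;> rfl

def UnaryPersistent (h : DM4 → DM4) : Prop := ∀ a c, ile a c → ile (h a) (h c)

def UnaryHarmonious (h : DM4 → DM4) : Prop := ∀ a, h (conf a) = conf (h a)

def BreaksAtT (h : DM4 → DM4) : Prop := ¬ (ile (h n) (h t) ∧ ile (h t) (h b))

theorem unaryPersistent_of_not_breaksAtT {g : DM4 → DM4} (ht : ¬ BreaksAtT g)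
    (hf : ¬ BreaksAtT (fun x => g (neg x))) : UnaryPersistent g := by
  rw [BreaksAtT, not_not] at ht hf
  obtain ⟨hnt, htb⟩ := ht
  obtain ⟨hnf, hfb⟩ : ile (g n) (g f) ∧ ile (g f) (g b) := hf
  rintro a c (rfl | rfl | rfl)
  · exact ile_refl _
  · cases c
    exacts [hnt, hnf, ile_refl _, ile_trans hnt htb]
  · cases a
    exacts [htb, hfb, ile_trans hnt htb, ile_refl _]

theorem breaksAtT_neg_comp {h : DM4 → DM4} (hh : BreaksAtT h) :
    BreaksAtT (fun x => neg (h x)) := by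
  simpa only [BreaksAtT, ile_neg_neg_iff] using hh

theorem meet_self_eq_of_breaksAtT {s : DM4 → DM4} (hs : s t = t) (hbr : BreaksAtT s) :
    (fun x => meet x (s x)) = box ∨ (fun x => meet x (s x)) = idnf ∨
      (fun x => meet x (s x)) = idbf := by
  have values : ∀ u w : DM4, ¬ (ile u t ∧ ile t w) →
      (meet n u = f ∧ meet b w = f) ∨ (meet n u = f ∧ meet b w = b) ∨
        (meet n u = n ∧ meet b w = f) := by decide
  rw [BreaksAtT, hs] at hbr
  rcases values _ _ hbr with ⟨hn, hb⟩ | ⟨hn, hb⟩ | ⟨hn, hb⟩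
  · left; funext x; cases x <;> simp only [hs, hn, hb, f_meet] <;> rfl
  · right; left; funext x; cases x <;> simp only [hs, hn, hb, f_meet] <;> rfl
  · right; right; funext x; cases x <;> simp only [hs, hn, hb, f_meet] <;> rfl

theorem not_unaryPersistent_box : ¬ UnaryPersistent box :=
  fun h => absurd (h n t (n_ile t)) (by decide)

theorem not_unaryPersistent_idnt : ¬ UnaryPersistent idnt :=
  fun h => absurd (h n f (n_ile f)) (by decide)

theorem not_unaryPersistent_idbt : ¬ UnaryPersistent idbt :=
  fun h => absurd (h f b (ile_b f)) (by decide)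

theorem unaryHarmonious_box : UnaryHarmonious box := fun a => by cases a <;> rfl

theorem not_unaryHarmonious_idnf : ¬ UnaryHarmonious idnf :=
  fun h => absurd (h n) (by decide)

theorem not_unaryHarmonious_idbf : ¬ UnaryHarmonious idbf :=
  fun h => absurd (h b) (by decide)

/-- The unary part of a clone containing DMA. -/
structure IsUnaryDMAClosed (U : Set (DM4 → DM4)) : Prop where
  id_mem : (fun x => x) ∈ U
  neg_mem : neg ∈ U
  const_t_mem : (fun _ => t) ∈ U
  comp_mem {g h : DM4 → DM4} : g ∈ U → h ∈ U → (fun x => g (h x)) ∈ U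
  meet_mem {g h : DM4 → DM4} : g ∈ U → h ∈ U → (fun x => meet (g x) (h x)) ∈ U
  join_mem {g h : DM4 → DM4} : g ∈ U → h ∈ U → (fun x => join (g x) (h x)) ∈ U

namespace IsUnaryDMAClosed

variable {U : Set (DM4 → DM4)}

theorem const_apply_t_mem (hU : IsUnaryDMAClosed U) {h : DM4 → DM4} (hh : h ∈ U) :
    (fun _ => h t) ∈ U :=
  hU.comp_mem hh hU.const_t_mem

theorem sep_harmonious (hU : IsUnaryDMAClosed U) :
    IsUnaryDMAClosed {h ∈ U | UnaryHarmonious h} where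
  id_mem := ⟨hU.id_mem, fun _ => rfl⟩
  neg_mem := ⟨hU.neg_mem, fun a => (conf_neg a).symm⟩
  const_t_mem := ⟨hU.const_t_mem, fun _ => rfl⟩
  comp_mem := fun ⟨hg, hg'⟩ ⟨hh, hh'⟩ =>
    ⟨hU.comp_mem hg hh, fun a => (congrArg _ (hh' a)).trans (hg' _)⟩
  meet_mem := fun ⟨hg, hg'⟩ ⟨hh, hh'⟩ =>
    ⟨hU.meet_mem hg hh, fun a => by simp only [hg' a, hh' a, conf_meet]⟩
  join_mem := fun ⟨hg, hg'⟩ ⟨hh, hh'⟩ =>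
    ⟨hU.join_mem hg hh, fun a => by simp only [hg' a, hh' a, conf_join]⟩

theorem exists_breaksAtT (hU : IsUnaryDMAClosed U) {g : DM4 → DM4} (hg : g ∈ U)
    (hnp : ¬ UnaryPersistent g) : ∃ h ∈ U, BreaksAtT h := by
  by_contra! H
  exact hnp (unaryPersistent_of_not_breaksAtT (H g hg) (H _ (hU.comp_mem hg hU.neg_mem)))

theorem exists_apply_t_eq_t_of_boolean (hU : IsUnaryDMAClosed U) {h : DM4 → DM4} (hh : h ∈ U)
    (hbr : BreaksAtT h) (hbool : h t = t ∨ h t = f) : ∃ s ∈ U, s t = t ∧ BreaksAtT s := by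
  rcases hbool with ht | hf
  · exact ⟨h, hh, ht, hbr⟩
  · exact ⟨_, hU.comp_mem hU.neg_mem hh, by simp [hf, neg], breaksAtT_neg_comp hbr⟩

/-- If `h t ∈ {n, b}`, breaking the chain forces `h (h t)` to be the other element of `{n, b}`,
and then `h ∨ h (h t)` works since `n ∨ b = t`, or to be Boolean, and then `x ↦ h (−x ∨ h t)`
takes this Boolean value at `t`. -/
theorem exists_apply_t_eq_t (hU : IsUnaryDMAClosed U) {h : DM4 → DM4} (hh : h ∈ U)
    (hbr : BreaksAtT h) : ∃ s ∈ U, s t = t ∧ BreaksAtT s := by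
  have hjoin : (fun x => join (h x) (h (h t))) ∈ U :=
    hU.join_mem hh (hU.const_apply_t_mem (hU.comp_mem hh hh))
  have hshift : (fun x => h (join (neg x) (h t))) ∈ U :=
    hU.comp_mem hh (hU.join_mem hU.neg_mem (hU.const_apply_t_mem hh))
  rcases hv : h t with _ | _ | _ | _
  · exact hU.exists_apply_t_eq_t_of_boolean hh hbr (.inl hv)
  · exact hU.exists_apply_t_eq_t_of_boolean hh hbr (.inr hv)
  · obtain hw | hw : h n = b ∨ h n = t ∨ h n = f := by
      simp only [BreaksAtT, hv, n_ile, and_true] at hbr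
      revert hbr; cases h n <;> decide
    · exact ⟨_, hjoin, by simp [hv, hw, join], by simp [BreaksAtT, hv, hw, join, ile]⟩
    · exact hU.exists_apply_t_eq_t_of_boolean hshift
        (by rcases hw with hw | hw <;> simp [BreaksAtT, hv, hw, join, neg, ile])
        (by simpa [hv, join, neg] using hw)
  · obtain hw | hw : h b = n ∨ h b = t ∨ h b = f := by
      simp only [BreaksAtT, hv, ile_b, true_and] at hbr
      revert hbr; cases h b <;> decide
    · exact ⟨_, hjoin, by simp [hv, hw, join], by simp [BreaksAtT, hv, hw, join, ile]⟩
    · exact hU.exists_apply_t_eq_t_of_boolean hshift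
        (by rcases hw with hw | hw <;> simp [BreaksAtT, hv, hw, join, neg, ile])
        (by simpa [hv, join, neg] using hw)

theorem box_or_idnf_or_idbf_mem (hU : IsUnaryDMAClosed U) {g : DM4 → DM4} (hg : g ∈ U)
    (hnp : ¬ UnaryPersistent g) : box ∈ U ∨ idnf ∈ U ∨ idbf ∈ U := by
  obtain ⟨h, hh, hbr⟩ := hU.exists_breaksAtT hg hnp
  obtain ⟨s, hs, hst, hsbr⟩ := hU.exists_apply_t_eq_t hh hbr
  have hmem := hU.meet_mem hU.id_mem hs
  rcases meet_self_eq_of_breaksAtT hst hsbr with he | he | he <;> rw [he] at hmem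
  exacts [.inl hmem, .inr (.inl hmem), .inr (.inr hmem)]

theorem box_or_idnt_or_idbt_mem (hU : IsUnaryDMAClosed U) {g : DM4 → DM4} (hg : g ∈ U)
    (hnp : ¬ UnaryPersistent g) : box ∈ U ∨ idnt ∈ U ∨ idbt ∈ U := by
  have conj {k : DM4 → DM4} (hk : k ∈ U) : (fun x => neg (k (neg x))) ∈ U :=
    hU.comp_mem hU.neg_mem (hU.comp_mem hk hU.neg_mem)
  rcases hU.box_or_idnf_or_idbf_mem hg hnp with h | h | h
  · exact .inl h
  · exact .inr (.inl (neg_idnf_neg ▸ conj h))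
  · exact .inr (.inr (neg_idbf_neg ▸ conj h))

theorem box_mem_of_harmonious (hU : IsUnaryDMAClosed U) {g : DM4 → DM4} (hg : g ∈ U)
    (hhar : UnaryHarmonious g) (hnp : ¬ UnaryPersistent g) : box ∈ U := by
  rcases hU.sep_harmonious.box_or_idnf_or_idbf_mem ⟨hg, hhar⟩ hnp with h | h | h
  · exact h.1
  · exact absurd h.2 not_unaryHarmonious_idnf
  · exact absurd h.2 not_unaryHarmonious_idbf

end IsUnaryDMAClosed

theorem toF1_apply_const (g : DMFun 0) : toF1 (fun a => g (fun _ => a)) = g := by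
  funext x
  exact congrArg g (funext fun i => congrArg x (Fin.fin_one_eq_zero i).symm)

theorem persistent_toF1_iff {h : DM4 → DM4} : Persistent (toF1 h) ↔ UnaryPersistent h :=
  ⟨fun hp a c hac => hp (fun _ => a) (fun _ => c) (fun _ => hac),
    fun hp _ _ hxy => hp _ _ (hxy 0)⟩

theorem harmonious_toF1_iff {h : DM4 → DM4} : Harmonious (toF1 h) ↔ UnaryHarmonious h :=
  ⟨fun hh a => hh (fun _ => a), fun hh x => hh (x 0)⟩

theorem IsClone.isUnaryDMAClosed {C : ∀ k : ℕ, Set (DMFun k)} (hC : IsClone C)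
    (hDMA : ∀ k g, InClone DMAGen k g → g ∈ C k) : IsUnaryDMAClosed {h | toF1 h ∈ C 0} where
  id_mem := hC.proj 0 0
  neg_mem := hDMA 0 _ (.base (.inr rfl))
  const_t_mem := hDMA 0 _ (.base (.inl (.inr (.inr (.inl rfl)))))
  comp_mem hg hh := hC.comp 0 0 (toF1 _) (fun _ => toF1 _) hg (fun _ => hh)
  meet_mem hg hh := hC.comp 0 1 (toF2 meet) ![_, _]
    (hDMA 1 _ (.base (.inl (.inl rfl)))) (Fin.forall_fin_two.2 ⟨hg, hh⟩)
  join_mem hg hh := hC.comp 0 1 (toF2 join) ![_, _]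
    (hDMA 1 _ (.base (.inl (.inr (.inl rfl))))) (Fin.forall_fin_two.2 ⟨hg, hh⟩)

/-- A clone above DMA contains a unary non-persistent function
iff it contains □, id_{n↦t}, or id_{b↦t}; it contains a unary harmonious
non-persistent function iff it contains □. -/
theorem unary_non_persistent (C : ∀ k : ℕ, Set (DMFun k))
    (hC : IsClone C) (hDMA : ∀ k g, InClone DMAGen k g → g ∈ C k) :
    ((∃ g ∈ C 0, ¬ Persistent g) ↔
      (toF1 box ∈ C 0 ∨ toF1 idnt ∈ C 0 ∨ toF1 idbt ∈ C 0)) ∧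
    ((∃ g ∈ C 0, Harmonious g ∧ ¬ Persistent g) ↔ toF1 box ∈ C 0) := by
  have hU := hC.isUnaryDMAClosed hDMA
  refine ⟨⟨?_, ?_⟩, ⟨?_, ?_⟩⟩
  · rintro ⟨g, hg, hnp⟩
    rw [← toF1_apply_const g, persistent_toF1_iff] at hnp
    rw [← toF1_apply_const g] at hg
    exact hU.box_or_idnt_or_idbt_mem hg hnp
  · rintro (h | h | h)
    · exact ⟨_, h, persistent_toF1_iff.not.2 not_unaryPersistent_box⟩
    · exact ⟨_, h, persistent_toF1_iff.not.2 not_unaryPersistent_idnt⟩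
    · exact ⟨_, h, persistent_toF1_iff.not.2 not_unaryPersistent_idbt⟩
  · rintro ⟨g, hg, hhar, hnp⟩
    rw [← toF1_apply_const g] at hg hhar hnp
    rw [persistent_toF1_iff] at hnp
    exact hU.box_mem_of_harmonious hg (harmonious_toF1_iff.1 hhar) hnp
  · exact fun h => ⟨_, h, harmonious_toF1_iff.2 unaryHarmonious_box,
      persistent_toF1_iff.not.2 not_unaryPersistent_box⟩

end DM4
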